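/- Double-negation stability of the intuitionistic translation: let A be a classical formula. Then ⊢_(i) ¬¬A^i → A^i, where ^i is the translation carrying each classical variable X_c to ¬¬i(X_c) for an injection i of 𝒱_c into a countable subset 𝒱'_i of 𝒱_i, fixing minimal and intuitionistic variables and ⊥, commuting with ∧ and →, and sending A ∨ B to ¬¬(A^i ∨ B^i). -/

import Mathlib

namespace PML

/-- The three kinds of propositional variables: minimal, intuitionistic, classical. -/
inductive Kind : Type
  | m | i | c
deriving DecidableEq

/-- Formulas of propositional mixed logic (PML). -/
inductive Formula : Type
  | var : Kind → ℕ → Formula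
  | bot : Formula
  | and : Formula → Formula → Formula
  | or : Formula → Formula → Formula
  | imp : Formula → Formula → Formula
deriving DecidableEq

namespace Formula

/-- ¬A abbreviates A → ⊥. -/
def neg (A : Formula) : Formula := imp A bot

/-- All variables occurring in the formula have a kind satisfying `p`. -/
def onlyKinds (p : Kind → Prop) : Formula → Prop
  | var k _ => p k
  | bot => True
  | and A B => onlyKinds p A ∧ onlyKinds p B
  | or A B => onlyKinds p A ∧ onlyKinds p B
  | imp A B => onlyKinds p A ∧ onlyKinds p B

/-- A classical formula: only classical variables. -/
def IsClassical (A : Formula) : Prop := onlyKinds (fun k => k = Kind.c) A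

/-- An intuitionistic formula: only intuitionistic and classical variables. -/
def IsIntuitionistic (A : Formula) : Prop := onlyKinds (fun k => k = Kind.i ∨ k = Kind.c) A

/-- A formula without classical variables. -/
def NoClassicalVar (A : Formula) : Prop := onlyKinds (fun k => k ≠ Kind.c) A

/-- A formula without classical and without intuitionistic variables. -/
def OnlyMinimalVar (A : Formula) : Prop := onlyKinds (fun k => k = Kind.m) A

/-- A formula without intuitionistic variables. -/
def NoIntuitVar (A : Formula) : Prop := onlyKinds (fun k => k ≠ Kind.i) A

/-- Substitution of the formula `F` for every occurrence of the variable of kind `k`, index `n`. -/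
def subst (F : Formula) (k : Kind) (n : ℕ) : Formula → Formula
  | var k' n' => if k' = k ∧ n' = n then F else var k' n'
  | bot => bot
  | and A B => and (subst F k n A) (subst F k n B)
  | or A B => or (subst F k n A) (subst F k n B)
  | imp A B => imp (subst F k n A) (subst F k n B)

end Formula

/-- Which optional rules are available: the intuitionistic absurdity rule (⊥_i),
the classical absurdity rule (⊥_c), and whether (∨_E) is unrestricted
(`fullOrE = false` gives the PML^∨ restriction). -/
structure Rules where
  botI : Bool
  botC : Bool
  fullOrE : Bool

/-- Natural deduction for mixed logic, parametrized by the available rules. -/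
inductive Deriv (R : Rules) : Set Formula → Formula → Prop
  | ax (A : Formula) : Deriv R {A} A
  | weak {Γ : Set Formula} {A : Formula} (B : Formula) : Deriv R Γ A → Deriv R (insert B Γ) A
  | andI {Γ₁ Γ₂ : Set Formula} {A₁ A₂ : Formula} :
      Deriv R Γ₁ A₁ → Deriv R Γ₂ A₂ → Deriv R (Γ₁ ∪ Γ₂) (A₁.and A₂)
  | andE₁ {Γ : Set Formula} {A₁ A₂ : Formula} : Deriv R Γ (A₁.and A₂) → Deriv R Γ A₁
  | andE₂ {Γ : Set Formula} {A₁ A₂ : Formula} : Deriv R Γ (A₁.and A₂) → Deriv R Γ A₂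
  | orI₁ {Γ : Set Formula} {A₁ : Formula} (A₂ : Formula) : Deriv R Γ A₁ → Deriv R Γ (A₁.or A₂)
  | orI₂ {Γ : Set Formula} {A₂ : Formula} (A₁ : Formula) : Deriv R Γ A₂ → Deriv R Γ (A₁.or A₂)
  | orE {Γ₁ Γ₂ Γ₃ : Set Formula} {A₁ A₂ B : Formula} :
      (R.fullOrE = true ∨ ((A₁.or A₂).IsClassical → B.IsClassical)) →
      Deriv R Γ₁ (A₁.or A₂) → Deriv R (insert A₁ Γ₂) B → Deriv R (insert A₂ Γ₃) B →
      Deriv R (Γ₁ ∪ Γ₂ ∪ Γ₃) B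
  | impI {Γ : Set Formula} {A₁ A₂ : Formula} : Deriv R (insert A₁ Γ) A₂ → Deriv R Γ (A₁.imp A₂)
  | impE {Γ₁ Γ₂ : Set Formula} {A₁ A₂ : Formula} :
      Deriv R Γ₁ (A₁.imp A₂) → Deriv R Γ₂ A₁ → Deriv R (Γ₁ ∪ Γ₂) A₂
  | botI {Γ : Set Formula} {A : Formula} :
      R.botI = true → A.IsIntuitionistic → Deriv R Γ Formula.bot → Deriv R Γ A
  | botC {Γ : Set Formula} {A : Formula} :
      R.botC = true → A.IsClassical → Deriv R Γ (A.neg.neg) → Deriv R Γ A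

/-- Γ ⊢_pml A : full mixed logic. -/
def DerivPML : Set Formula → Formula → Prop := Deriv ⟨true, true, true⟩

/-- Γ ⊢_(i) A : derivable without the rule (⊥_c). -/
def DerivI : Set Formula → Formula → Prop := Deriv ⟨true, false, true⟩

/-- Γ ⊢_(m) A : derivable without the rules (⊥_i) and (⊥_c). -/
def DerivM : Set Formula → Formula → Prop := Deriv ⟨false, false, true⟩

/-- Γ ⊢_(i') A : derivable without the rule (⊥_i). -/
def DerivI' : Set Formula → Formula → Prop := Deriv ⟨false, true, true⟩

/-- Γ ⊢^∨ A : derivable in PML^∨ (restricted ∨-elimination). -/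
def DerivVee : Set Formula → Formula → Prop := Deriv ⟨true, true, false⟩

/-- A Kripke frame over a poset `W`: a monotone forcing relation on atoms. -/
structure KripkeFrame (W : Type) [PartialOrder W] where
  fvar : W → Kind → ℕ → Prop
  fbot : W → Prop
  mono_var : ∀ {a b : W} (k : Kind) (n : ℕ), a ≤ b → fvar a k n → fvar b k n
  mono_bot : ∀ {a b : W}, a ≤ b → fbot a → fbot b

variable {W : Type} [PartialOrder W]

/-- Forcing, extended to compound formulas. -/
def KripkeFrame.force (M : KripkeFrame W) : W → Formula → Prop
  | a, .var k n => M.fvar a k n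
  | a, .bot => M.fbot a
  | a, .and A B => M.force a A ∧ M.force a B
  | a, .or A B => M.force a A ∨ M.force a B
  | a, .imp A B => ∀ b : W, a ≤ b → M.force b A → M.force b B

/-- A formula is valid in a model iff it is forced at every node. -/
def KripkeFrame.Valid (M : KripkeFrame W) (A : Formula) : Prop := ∀ a : W, M.force a A

/-- A mixed Kripke model: (2) a node forcing ⊥ forces every intuitionistic or classical
variable; (3) a classical variable forced at a node not forcing ⊥ is forced everywhere. -/
def IsMixed (M : KripkeFrame W) : Prop :=
  (∀ (a : W) (k : Kind) (n : ℕ), M.fbot a → (k = Kind.i ∨ k = Kind.c) → M.fvar a k n) ∧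
  (∀ (a : W) (n : ℕ), M.fvar a Kind.c n → ¬ M.fbot a → ∀ b : W, M.fvar b Kind.c n)

/-- An intuitionistic mixed Kripke model: restricted to atoms in 𝒱_m ∪ 𝒱_i ∪ {⊥}
(no classical atom is forced) and a node forcing ⊥ forces every intuitionistic variable. -/
def IsIntMixed (M : KripkeFrame W) : Prop :=
  (∀ (a : W) (n : ℕ), ¬ M.fvar a Kind.c n) ∧
  (∀ (a : W) (n : ℕ), M.fbot a → M.fvar a Kind.i n)

/-- A minimal mixed Kripke model: restricted to atoms in 𝒱_m ∪ {⊥}. -/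
def IsMinMixed (M : KripkeFrame W) : Prop :=
  (∀ (a : W) (n : ℕ), ¬ M.fvar a Kind.i n) ∧ (∀ (a : W) (n : ℕ), ¬ M.fvar a Kind.c n)

/-- Semantic entailment: every mixed Kripke model validating all of Γ validates A. -/
def Entails (Γ : Set Formula) (A : Formula) : Prop :=
  ∀ (W : Type) [PartialOrder W] [Nonempty W] (M : KripkeFrame W),
    IsMixed M → (∀ B ∈ Γ, M.Valid B) → M.Valid A

/-- A saturated set of formulas. -/
def Saturated (Δ : Set Formula) : Prop :=
  ∀ C D : Formula, DerivPML Δ (C.or D) → C ∈ Δ ∨ D ∈ Δ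

/-- The restriction 𝒦_(i) of a model to atoms in 𝒱_m ∪ 𝒱_i ∪ {⊥}. -/
def KripkeFrame.restrictI (M : KripkeFrame W) : KripkeFrame W where
  fvar a k n := k ≠ Kind.c ∧ M.fvar a k n
  fbot := M.fbot
  mono_var := by
    intro a b k n hab h
    exact ⟨h.1, M.mono_var k n hab h.2⟩
  mono_bot := fun hab h => M.mono_bot hab h

/-- The restriction 𝒦_(m) of a model to atoms in 𝒱_m ∪ {⊥}. -/
def KripkeFrame.restrictM (M : KripkeFrame W) : KripkeFrame W where
  fvar a k n := k = Kind.m ∧ M.fvar a k n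
  fbot := M.fbot
  mono_var := by
    intro a b k n hab h
    exact ⟨h.1, M.mono_var k n hab h.2⟩
  mono_bot := fun hab h => M.mono_bot hab h

/-- The translation ^m : intuitionistic variables X_i are sent to ¬¬ m(X_i). -/
def Formula.transM (m : ℕ → ℕ) : Formula → Formula
  | .var Kind.i n => ((Formula.var Kind.m (m n)).neg).neg
  | .var k n => .var k n
  | .bot => .bot
  | .and A B => .and (Formula.transM m A) (Formula.transM m B)
  | .or A B => .or (Formula.transM m A) (Formula.transM m B)
  | .imp A B => .imp (Formula.transM m A) (Formula.transM m B)

/-- The translation ^i : classical variables X_c are sent to ¬¬ i(X_c), and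
disjunctions are doubly negated. -/
def Formula.transI (f : ℕ → ℕ) : Formula → Formula
  | .var Kind.c n => ((Formula.var Kind.i (f n)).neg).neg
  | .var k n => .var k n
  | .bot => .bot
  | .and A B => .and (Formula.transI f A) (Formula.transI f B)
  | .or A B => (((Formula.transI f A).or (Formula.transI f B)).neg).neg
  | .imp A B => .imp (Formula.transI f A) (Formula.transI f B)

end PML

/-!
Classical variables and disjunctions are translated to negations, and every negation is
`¬¬`-stable already in minimal logic, since `¬¬¬P → ¬P`. The other constructors preserve
stability: `⊥` is stable because `⊥ → ⊥` is provable, a conjunction of stable formulas is stable,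
and an implication is stable as soon as its consequent is.
-/

namespace PML

def Stable (R : Rules) (A : Formula) : Prop := Deriv R ∅ (A.neg.neg.imp A)

variable {R : Rules} {Γ Δ : Set Formula} {A B : Formula}

namespace Deriv

theorem union_right (h : Deriv R Γ A) (hΔ : Δ.Finite) : Deriv R (Γ ∪ Δ) A := by
  induction Δ, hΔ using Set.Finite.induction_on with
  | empty => simpa using h
  | insert _ _ ih =>
    rw [Set.union_insert]
    exact ih.weak _

theorem of_empty [Finite Γ] (h : Deriv R ∅ A) : Deriv R Γ A := by
  simpa using h.union_right (Set.toFinite Γ)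

theorem of_mem [Finite Γ] (hA : A ∈ Γ := by simp) : Deriv R Γ A := by
  simpa [Set.singleton_union, Set.insert_eq_of_mem hA] using
    (Deriv.ax (R := R) A).union_right (Set.toFinite Γ)

theorem mp (h₁ : Deriv R Γ (A.imp B)) (h₂ : Deriv R Γ A) : Deriv R Γ B := by
  simpa using h₁.impE h₂

theorem andI' (h₁ : Deriv R Γ A) (h₂ : Deriv R Γ B) : Deriv R Γ (A.and B) := by
  simpa using h₁.andI h₂

theorem neg_neg_map [Finite Γ] (hAB : Deriv R Γ (A.imp B)) (hA : Deriv R Γ A.neg.neg) :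
    Deriv R Γ B.neg.neg :=
  impI <| (hA.weak _).mp <| impI <|
    (of_mem (A := B.neg)).mp <| ((hAB.weak _).weak _).mp of_mem

end Deriv

theorem Stable.of_neg_neg [Finite Γ] (hA : Stable R A) (h : Deriv R Γ A.neg.neg) :
    Deriv R Γ A :=
  (Deriv.of_empty hA).mp h

theorem stable_neg (P : Formula) : Stable R P.neg :=
  .impI <| .impI <| (Deriv.of_mem (A := P.neg.neg.neg)).mp <| .impI <|
    (Deriv.of_mem (A := P.neg)).mp .of_mem

theorem stable_bot : Stable R .bot :=
  .impI <| (Deriv.of_mem (A := Formula.bot.neg.neg)).mp <| .impI .of_mem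

theorem Stable.and (hA : Stable R A) (hB : Stable R B) : Stable R (A.and B) := by
  refine .impI (.andI' (hA.of_neg_neg ?_) (hB.of_neg_neg ?_)) <;>
    refine Deriv.neg_neg_map (A := A.and B) ?_ .of_mem
  · exact .impI (.andE₁ (.of_mem (A := A.and B)))
  · exact .impI (.andE₂ (.of_mem (A := A.and B)))

theorem Stable.imp (hB : Stable R B) (A : Formula) : Stable R (A.imp B) := by
  refine .impI <| .impI <| hB.of_neg_neg <| Deriv.neg_neg_map (A := A.imp B) ?_ .of_mem
  exact .impI <| (Deriv.of_mem (A := A.imp B)).mp .of_mem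

end PML

theorem PML.transI_stable_general (f : ℕ → ℕ)
    (A : PML.Formula) (hA : A.IsClassical) :
    PML.DerivI ∅ (PML.Formula.imp ((PML.Formula.transI f A).neg.neg) (PML.Formula.transI f A)) := by
  change PML.Stable _ (A.transI f)
  induction A with
  | var k n =>
    obtain rfl : k = .c := hA
    exact PML.stable_neg _
  | bot => exact PML.stable_bot
  | and B C ihB ihC => exact (ihB hA.1).and (ihC hA.2)
  | or => exact PML.stable_neg _
  | imp B C _ ihC => exact (ihC hA.2).imp _

/-- Double-negation stability of the intuitionistic translation: for a classical formula A,
⊢_(i) ¬¬A^i → A^i, where ^i sends each classical variable X_c to ¬¬ i(X_c) for an injection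
i of the classical variables into the intuitionistic variables, and doubly negates ∨. -/
theorem PML.transI_stable (f : ℕ → ℕ) (hf : Function.Injective f)
    (A : PML.Formula) (hA : A.IsClassical) :
    PML.DerivI ∅ (PML.Formula.imp ((PML.Formula.transI f A).neg.neg) (PML.Formula.transI f A)) :=
  PML.transI_stable_general f A hA
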